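/- arXiv:2403.11941 — 7 statements merged into one kernel-verified Lean document; each statement's English description precedes it below -/
import Mathlib

section
/- Let F be a field and n ≥ 1. Suppose X ⊆ [n] × [n] consists of r full rows together with t additional individual entries (so |X| = rn + t, with the r full rows disjoint from the t entries' rows being allowed), and suppose that for every antisymmetric matrix A ∈ F^{n×n} (i.e. A^T = -A) we have ∑_{(i,j) ∈ X} A_{ij} = 0. Then the indicator matrix of X is symmetric, and consequently t ≥ r(n - r). -/
/-- If `X ⊆ [n] × [n]` contains the full rows indexed by `R` (with `t` further entries)
and `∑_{(i,j)∈X} A i j = 0` for every antisymmetric matrix `A` over a field of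
characteristic `≠ 2`, then the indicator of `X` is symmetric and `t ≥ r(n - r)`. -/
theorem stmt3 (F : Type) [Field F] (hF : (2 : F) ≠ 0) (n : ℕ) (hn : 1 ≤ n)
    (X : Finset (Fin n × Fin n)) (R : Finset (Fin n))
    (hR : ∀ i ∈ R, ∀ j : Fin n, (i, j) ∈ X)
    (hconstraint : ∀ A : Matrix (Fin n) (Fin n) F, Matrix.transpose A = -A → ∑ p ∈ X, A p.1 p.2 = 0) :
    (∀ i j : Fin n, (i, j) ∈ X ↔ (j, i) ∈ X) ∧
      R.card * (n - R.card) ≤ (X \ R ×ˢ (Finset.univ : Finset (Fin n))).card := by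
  have hsymm : ∀ i j : Fin n, (i, j) ∈ X ↔ (j, i) ∈ X := by
    intro i j
    by_cases hij : i = j
    · subst hij; rfl
    · set A : Matrix (Fin n) (Fin n) F :=
        Matrix.single i j 1 - Matrix.single j i 1 with hA
      have hanti : Matrix.transpose A = -A := by
        ext a b
        simp [hA, Matrix.single, Matrix.transpose_apply]
        by_cases h1 : j = a <;> by_cases h2 : i = b <;> simp [h1, h2, and_comm]
      have hsum := hconstraint A hanti
      have hval : ∀ p : Fin n × Fin n,
          A p.1 p.2 = (if p = (i, j) then (1:F) else 0) - (if p = (j, i) then (1:F) else 0) := by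
        rintro ⟨a, b⟩
        simp [hA, Matrix.single, Prod.ext_iff, eq_comm, and_comm]
      rw [Finset.sum_congr rfl (fun p _ => hval p), Finset.sum_sub_distrib,
        Finset.sum_ite_eq' X (i, j) (fun _ => (1:F)),
        Finset.sum_ite_eq' X (j, i) (fun _ => (1:F))] at hsum
      by_cases h1 : (i, j) ∈ X <;> by_cases h2 : (j, i) ∈ X <;>
        simp [h1, h2] at hsum ⊢
  refine ⟨hsymm, ?_⟩
  have hsub : Rᶜ ×ˢ R ⊆ X \ R ×ˢ (Finset.univ : Finset (Fin n)) := by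
    rintro ⟨a, b⟩ hab
    rw [Finset.mem_product] at hab
    rw [Finset.mem_sdiff, Finset.mem_product]
    refine ⟨(hsymm a b).mpr (hR b hab.2 a), ?_⟩
    intro h
    exact (Finset.mem_compl.mp hab.1) h.1
  calc R.card * (n - R.card) = Rᶜ.card * R.card := by
        rw [Finset.card_compl, Fintype.card_fin, Nat.mul_comm]
    _ = (Rᶜ ×ˢ R).card := (Finset.card_product _ _).symm
    _ ≤ _ := Finset.card_le_card hsub
end

section
/- Let C ⊆ F^D be a linear code, and let I, S ⊆ D with S unconstrained with respect to C. Then I ∪ S is constrained with respect to C if and only if I \ S is constrained with respect to the zero subcode Z_S(C) := { w ∈ C : w|_S = 0 }. -/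
/-- `J` is constrained with respect to `C ⊆ F^D` if some vector which is nonzero somewhere
on `J` annihilates every codeword on `J`. -/
def Constrained (F D : Type) [Field F] (C : Set (D → F)) (J : Finset D) : Prop :=
  ∃ z : D → F, (∃ x ∈ J, z x ≠ 0) ∧ ∀ w ∈ C, ∑ x ∈ J, z x * w x = 0

/-!
Write `Z` for the codewords vanishing on `S`. A dual vector `z` on `I ∪ S` that annihilates `C`
also annihilates `Z` on `I \ S`, and it cannot vanish on `I \ S`, since otherwise it would
constrain `S`. Conversely, if `z` on `I \ S` annihilates `Z`, the functional
`w ↦ ∑_{I \ S} z w` on `C` vanishes on the common kernel of the evaluations at the points of `S`,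
hence is a linear combination `∑_{x ∈ S} c x · w x` of them; extending `z` by `-c` on `S`
constrains `I ∪ S`.
-/

open Finset

section

variable {F D : Type} [Field F] [DecidableEq D]

lemma sum_union_eq_sum_sdiff_add_sum {M : Type} [AddCommMonoid M] (I S : Finset D) (f : D → M) :
    ∑ x ∈ I ∪ S, f x = ∑ x ∈ I \ S, f x + ∑ x ∈ S, f x := by
  rw [← sum_sdiff subset_union_right, union_sdiff_right]

lemma constrained_sdiff_of_constrained_union {C : Set (D → F)} {I S : Finset D}
    (hS : ¬ Constrained F D C S) (h : Constrained F D C (I ∪ S)) :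
    Constrained F D {w | w ∈ C ∧ ∀ x ∈ S, w x = 0} (I \ S) := by
  obtain ⟨z, ⟨x, hxIS, hzx⟩, hzC⟩ := h
  refine ⟨z, ?_, fun w ⟨hwC, hwS⟩ => ?_⟩
  · by_contra! hzI
    refine hS ⟨z, ⟨x, ?_, hzx⟩, fun w hw => ?_⟩
    · by_contra hxS
      exact hzx (hzI x (mem_sdiff.2 ⟨(mem_union.1 hxIS).resolve_right hxS, hxS⟩))
    · have := hzC w hw
      rwa [sum_union_eq_sum_sdiff_add_sum,
        sum_eq_zero (s := I \ S) fun y hy => by rw [hzI y hy, zero_mul], zero_add] at this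
  · have := hzC w hwC
    rwa [sum_union_eq_sum_sdiff_add_sum,
      sum_eq_zero (s := S) fun y hy => by rw [hwS y hy, mul_zero], add_zero] at this

lemma exists_sum_mul_eq_sum_mul_of_annihilates_subcode {C : Submodule F (D → F)}
    {S T : Finset D} {z : D → F}
    (h : ∀ w ∈ C, (∀ x ∈ S, w x = 0) → ∑ y ∈ T, z y * w y = 0) :
    ∃ c : D → F, ∀ w ∈ C, ∑ x ∈ S, c x * w x = ∑ y ∈ T, z y * w y := by
  let ev : D → C →ₗ[F] F := fun y => (LinearMap.proj y).comp C.subtype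
  let K : C →ₗ[F] F := ∑ y ∈ T, z y • ev y
  have hker : ⨅ x : S, LinearMap.ker (ev x) ≤ LinearMap.ker K := fun w hw => by
    simp only [Submodule.mem_iInf, LinearMap.mem_ker] at hw
    simpa [K, ev] using h w w.2 fun x hx => hw ⟨x, hx⟩
  obtain ⟨c, hc⟩ :=
    (Submodule.mem_span_range_iff_exists_fun F).1 (mem_span_of_iInf_ker_le_ker hker)
  refine ⟨fun x => if hx : x ∈ S then c ⟨x, hx⟩ else 0, fun w hw => ?_⟩
  have hKw := LinearMap.congr_fun hc ⟨w, hw⟩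
  simp only [LinearMap.sum_apply, LinearMap.smul_apply, K, ev, LinearMap.comp_apply,
    Submodule.subtype_apply, LinearMap.proj_apply, smul_eq_mul] at hKw
  rw [← hKw, ← sum_coe_sort S]
  exact sum_congr rfl fun x _ => by simp [x.2]

lemma constrained_union_of_constrained_sdiff {C : Submodule F (D → F)} {I S : Finset D}
    (h : Constrained F D {w | w ∈ C ∧ ∀ x ∈ S, w x = 0} (I \ S)) :
    Constrained F D C (I ∪ S) := by
  obtain ⟨z, ⟨x, hxIS, hzx⟩, hzZ⟩ := h
  obtain ⟨c, hc⟩ := exists_sum_mul_eq_sum_mul_of_annihilates_subcode (C := C) (S := S)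
    fun w hwC hwS => hzZ w ⟨hwC, hwS⟩
  refine ⟨fun y => if y ∈ S then -c y else z y,
    ⟨x, mem_union_left _ (mem_sdiff.1 hxIS).1, by simpa [(mem_sdiff.1 hxIS).2] using hzx⟩,
    fun w hw => ?_⟩
  have hzw : ∑ y ∈ I \ S, (if y ∈ S then -c y else z y) * w y = ∑ y ∈ I \ S, z y * w y :=
    sum_congr rfl fun y hy => by rw [if_neg (mem_sdiff.1 hy).2]
  have hcw : ∑ y ∈ S, (if y ∈ S then -c y else z y) * w y = -∑ y ∈ S, c y * w y := by
    rw [← sum_neg_distrib]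
    exact sum_congr rfl fun y hy => by rw [if_pos hy, neg_mul]
  rw [sum_union_eq_sum_sdiff_add_sum, hzw, hcw, hc w hw, add_neg_cancel]

end

/-- If `S` is unconstrained with respect to a linear code `C`, then `I ∪ S` is constrained
with respect to `C` iff `I \ S` is constrained with respect to the subcode of codewords
vanishing on `S`. -/
theorem stmt6 (F D : Type) [Field F] [DecidableEq D] (C : Submodule F (D → F))
    (I S : Finset D) (hS : ¬ Constrained F D C S) :
    Constrained F D C (I ∪ S) ↔
      Constrained F D {w : D → F | w ∈ C ∧ ∀ x ∈ S, w x = 0} (I \ S) :=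
  ⟨constrained_sdiff_of_constrained_union hS, constrained_union_of_constrained_sdiff⟩
end

section
/- (Combinatorial Nullstellensatz, multilinear/hypercube corollary) Let F be a field, m ≥ 1, and let f ∈ F[X_1,...,X_m] be a polynomial with individual degree at most d in each variable, d ≥ 2. If f(a) = 0 for all a ∈ {0,1}^m, then there exist polynomials T_1,...,T_m ∈ F[X_1,...,X_m], with T_i of degree at most d-2 in X_i and at most d in each other variable, such that f = ∑_{i=1}^m X_i(1 - X_i) T_i. -/
/-!
Reducing every monomial one variable at a time with
`x ^ k = x ^ min k 1 - x (1 - x) (1 + x + ⋯ + x ^ (k - 2))` writes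
`f = g + ∑ i, X i (1 - X i) T i` with `g` multilinear; no individual degree grows, and `T i`
loses two degrees in `X i`. Each `X i (1 - X i)` vanishes on `{0,1}^m`, hence so does `g`, and a
polynomial of individual degree `< 2` vanishing on `{0,1}^m` is zero by Alon's nullstellensatz.
-/

open MvPolynomial Finset

theorem pow_eq_pow_min_one_sub_mul_geom_sum {R : Type*} [CommRing R] (x : R) (k : ℕ) :
    x ^ k = x ^ min k 1 - x * (1 - x) * ∑ j ∈ range (k - 1), x ^ j := by
  rcases k with _ | n
  · simp
  · rw [mul_assoc, mul_neg_geom_sum]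
    simp only [Nat.add_sub_cancel, min_eq_right (Nat.le_add_left 1 n)]
    ring

namespace MvPolynomial

variable {R σ : Type*} [CommRing R]

theorem monomial_update (s : σ →₀ ℕ) (i : σ) (k : ℕ) (c : R) :
    monomial (s.update i k) c = monomial (s.erase i) c * X i ^ k := by
  classical
  rw [X_pow_eq_monomial, monomial_mul, mul_one, Finsupp.update_eq_erase_add_single]

theorem monomial_eq_add_X_mul_one_sub_X_mul (s : σ →₀ ℕ) (i : σ) (c : R) :
    monomial s c = monomial (s.update i (min (s i) 1)) c
      + X i * (1 - X i) * ∑ j ∈ range (s i - 1), monomial (s.update i j) (-c) := by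
  classical
  simp only [monomial_update, map_neg, sum_neg_distrib, ← mul_sum]
  conv_lhs => rw [← Finsupp.update_self s i, monomial_update,
    pow_eq_pow_min_one_sub_mul_geom_sum (X i) (s i)]
  ring

theorem degreeOf_sum_monomial_le {ι : Type*} (A : Finset ι) (t : ι → σ →₀ ℕ) (c : ι → R)
    (i : σ) {n : ℕ} (h : ∀ a ∈ A, t a i ≤ n) :
    degreeOf i (∑ a ∈ A, monomial (t a) (c a)) ≤ n := by
  classical
  refine (degreeOf_sum_le _ _ _).trans (Finset.sup_le fun a ha => degreeOf_le_iff.mpr ?_)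
  intro s hs
  rw [Finset.mem_singleton.mp (support_monomial_subset hs)]
  exact h a ha

theorem exists_eq_add_X_mul_one_sub_X_mul (f : MvPolynomial σ R) (i : σ) :
    ∃ g T : MvPolynomial σ R, f = g + X i * (1 - X i) * T ∧
      degreeOf i g ≤ 1 ∧ (∀ j, degreeOf j g ≤ degreeOf j f) ∧
      degreeOf i T ≤ degreeOf i f - 2 ∧ ∀ j ≠ i, degreeOf j T ≤ degreeOf j f := by
  classical
  refine ⟨∑ s ∈ f.support, monomial (s.update i (min (s i) 1)) (coeff s f),
    ∑ s ∈ f.support, ∑ k ∈ range (s i - 1), monomial (s.update i k) (-coeff s f),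
    ?_, ?_, ?_, ?_, ?_⟩
  · conv_lhs => rw [← support_sum_monomial_coeff f]
    rw [sum_congr rfl fun s _ => monomial_eq_add_X_mul_one_sub_X_mul s i (coeff s f),
      sum_add_distrib, mul_sum]
  · exact degreeOf_sum_monomial_le _ _ _ i fun s _ => by simp
  · refine fun j => degreeOf_sum_monomial_le _ _ _ j fun s hs => ?_
    rw [Finsupp.update_apply]
    split_ifs with hj
    · exact (min_le_left _ _).trans (hj ▸ monomial_le_degreeOf i hs)
    · exact monomial_le_degreeOf j hs
  · refine (degreeOf_sum_le _ _ _).trans (Finset.sup_le fun s hs => ?_)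
    refine degreeOf_sum_monomial_le _ _ _ i fun k hk => ?_
    have := monomial_le_degreeOf i hs
    rw [mem_range] at hk
    rw [Finsupp.update_apply, if_pos rfl]
    omega
  · refine fun j hj => (degreeOf_sum_le _ _ _).trans (Finset.sup_le fun s hs => ?_)
    refine degreeOf_sum_monomial_le _ _ _ j fun k _ => ?_
    rw [Finsupp.update_apply, if_neg hj]
    exact monomial_le_degreeOf j hs

theorem exists_eq_add_sum_X_mul_one_sub_X_mul (I : Finset σ) (f : MvPolynomial σ R) {d : ℕ}
    (hf : ∀ j, degreeOf j f ≤ d) :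
    ∃ (g : MvPolynomial σ R) (T : σ → MvPolynomial σ R),
      f = g + ∑ i ∈ I, X i * (1 - X i) * T i ∧
      (∀ i ∈ I, degreeOf i g ≤ 1) ∧ (∀ j, degreeOf j g ≤ d) ∧
      ∀ i, degreeOf i (T i) ≤ d - 2 ∧ ∀ j ≠ i, degreeOf j (T i) ≤ d := by
  classical
  induction I using Finset.induction_on with
  | empty => exact ⟨f, 0, by simp, by simp, hf, by simp⟩
  | @insert i₀ I hi₀ ih =>
    obtain ⟨g, T, hfg, hgI, hgd, hT⟩ := ih
    obtain ⟨g', T', hgg', hg'i₀, hg'g, hT'i₀, hT'⟩ := exists_eq_add_X_mul_one_sub_X_mul g i₀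
    refine ⟨g', Function.update T i₀ T', ?_, ?_, fun j => (hg'g j).trans (hgd j), fun i => ?_⟩
    · have hsum : ∑ i ∈ I, X i * (1 - X i) * Function.update T i₀ T' i
          = ∑ i ∈ I, X i * (1 - X i) * T i :=
        sum_congr rfl fun i hi => by rw [Function.update_of_ne (ne_of_mem_of_not_mem hi hi₀)]
      rw [sum_insert hi₀, Function.update_self, hsum, hfg, hgg']
      ring
    · intro i hi
      rcases mem_insert.mp hi with rfl | hi
      · exact hg'i₀
      · exact (hg'g i).trans (hgI i hi)
    · rcases eq_or_ne i i₀ with rfl | hii₀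
      · rw [Function.update_self]
        exact ⟨hT'i₀.trans (Nat.sub_le_sub_right (hgd i) 2), fun j hj => (hT' j hj).trans (hgd j)⟩
      · rw [Function.update_of_ne hii₀]
        exact hT i

theorem eval_bool_X_mul_one_sub_X_mul (a : σ → Bool) (i : σ) (p : MvPolynomial σ R) :
    eval (fun j => if a j then (1 : R) else 0) (X i * (1 - X i) * p) = 0 := by
  cases h : a i <;> simp [h]

theorem eq_zero_of_degreeOf_le_one_of_eval_bool_eq_zero [Finite σ] [IsDomain R]
    (g : MvPolynomial σ R) (hg : ∀ i, degreeOf i g ≤ 1)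
    (heval : ∀ a : σ → Bool, eval (fun i => if a i then (1 : R) else 0) g = 0) : g = 0 := by
  classical
  refine eq_zero_of_eval_zero_at_prod_finset g (fun _ => {0, 1}) (fun i => ?_) fun x hx => ?_
  · rw [card_pair zero_ne_one]
    exact Nat.lt_succ_of_le (hg i)
  · convert heval fun i => decide (x i = 1) using 3
    funext i
    have : x i = 0 ∨ x i = 1 := by simpa using hx i
    rcases this with h | h <;> simp [h]

end MvPolynomial

theorem stmt8_general (F : Type) [Field F] (m : ℕ) (d : ℕ)
    (f : MvPolynomial (Fin m) F) (hdeg : ∀ i, f.degreeOf i ≤ d)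
    (hvanish : ∀ a : Fin m → Bool, eval (fun i => if a i then (1 : F) else 0) f = 0) :
    ∃ T : Fin m → MvPolynomial (Fin m) F,
      (∀ i, (T i).degreeOf i ≤ d - 2 ∧ ∀ j, j ≠ i → (T i).degreeOf j ≤ d) ∧
      f = ∑ i, X i * (1 - X i) * T i := by
  obtain ⟨g, T, hfg, hg1, -, hT⟩ := exists_eq_add_sum_X_mul_one_sub_X_mul univ f hdeg
  have hg : g = 0 := by
    refine eq_zero_of_degreeOf_le_one_of_eval_bool_eq_zero g (fun i => hg1 i (mem_univ i))
      fun a => ?_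
    have := hvanish a
    rwa [hfg, map_add, map_sum, sum_eq_zero fun i _ => eval_bool_X_mul_one_sub_X_mul a i (T i),
      add_zero] at this
  exact ⟨T, hT, by rw [hfg, hg, zero_add]⟩

/-- Combinatorial nullstellensatz, hypercube corollary: if `f` has individual degrees at
most `d ≥ 2` and vanishes on `{0,1}^m`, then `f = ∑ i, X i (1 - X i) T i` where `T i` has
degree at most `d - 2` in `X i` and at most `d` in the other variables. -/
theorem stmt8 (F : Type) [Field F] (m : ℕ) (hm : 1 ≤ m) (d : ℕ) (hd : 2 ≤ d)
    (f : MvPolynomial (Fin m) F) (hdeg : ∀ i, f.degreeOf i ≤ d)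
    (hvanish : ∀ a : Fin m → Bool, eval (fun i => if a i then (1 : F) else 0) f = 0) :
    ∃ T : Fin m → MvPolynomial (Fin m) F,
      (∀ i, (T i).degreeOf i ≤ d - 2 ∧ ∀ j, j ≠ i → (T i).degreeOf j ≤ d) ∧
      f = ∑ i, X i * (1 - X i) * T i :=
  stmt8_general F m d f hdeg hvanish
end

section
/- Let F be a field, m ≥ 1, let I ⊆ F^m be a finite set, let S_1,...,S_m ⊆ F be finite and S := S_1 × ... × S_m, and set d_i := |S_i| - 1. Then there exists a set G ⊆ S with |G| ≥ |S| - |I| such that for every g ∈ G there is a polynomial p_g of individual degree at most d_i in X_i satisfying p_g(g) = 1 and p_g(x) = 0 for all x ∈ I ∪ (G \ {g}). -/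
open MvPolynomial

section aux

variable {F : Type} [Field F] [DecidableEq F] {m : ℕ}

/-- Lagrange interpolator on the grid. -/
noncomputable def lagr (S : Fin m → Finset F) (g : Fin m → F) : MvPolynomial (Fin m) F :=
  ∏ i, ∏ t ∈ (S i).erase (g i), (C ((g i - t)⁻¹) * (X i - C t))

lemma lagr_degreeOf (S : Fin m → Finset F) (g : Fin m → F) (hg : ∀ i, g i ∈ S i) (j : Fin m) :
    (lagr S g).degreeOf j ≤ (S j).card - 1 := by
  classical
  refine (degreeOf_prod_le j _ _).trans ?_
  have h : ∀ i : Fin m, (∏ t ∈ (S i).erase (g i), (C ((g i - t)⁻¹) * (X i - C t))).degreeOf j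
      ≤ if i = j then (S j).card - 1 else 0 := by
    intro i
    refine (degreeOf_prod_le j _ _).trans ?_
    have h1 : ∀ t : F, (C ((g i - t)⁻¹) * (X i - C t)).degreeOf j
        ≤ if i = j then 1 else 0 := by
      intro t
      refine (degreeOf_mul_le j _ _).trans ?_
      rcases subsingleton_or_nontrivial F with hF | hF
      · simp [Subsingleton.elim (X i - C t : MvPolynomial (Fin m) F) 0,
          Subsingleton.elim ((C ((g i - t)⁻¹) : MvPolynomial (Fin m) F)) 0]
      have : (X i - C t : MvPolynomial (Fin m) F).degreeOf j ≤ if i = j then 1 else 0 := by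
        refine (degreeOf_sub_le j _ _).trans ?_
        simp [degreeOf_X, degreeOf_C, eq_comm]
      simpa [degreeOf_C] using this
    refine (Finset.sum_le_sum fun t _ => h1 t).trans ?_
    by_cases hij : i = j
    · subst hij
      simp only [if_pos rfl, Finset.sum_const, smul_eq_mul, mul_one]
      rw [Finset.card_erase_of_mem (hg i)]
      simp
    · simp [hij]
  refine (Finset.sum_le_sum fun i _ => h i).trans ?_
  simp

lemma lagr_eval_self (S : Fin m → Finset F) (g : Fin m → F) :
    eval g (lagr S g) = 1 := by
  classical
  unfold lagr
  rw [eval_prod]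
  refine Finset.prod_eq_one fun i _ => ?_
  rw [eval_prod]
  refine Finset.prod_eq_one fun t ht => ?_
  have : g i - t ≠ 0 := sub_ne_zero.2 (Ne.symm (Finset.ne_of_mem_erase ht))
  simp [inv_mul_cancel₀ this]

lemma lagr_eval_ne (S : Fin m → Finset F) (g x : Fin m → F)
    (hx : ∀ i, x i ∈ S i) (hne : x ≠ g) :
    eval x (lagr S g) = 0 := by
  classical
  obtain ⟨j, hj⟩ : ∃ j, x j ≠ g j := by
    by_contra h
    push_neg at h
    exact hne (funext h)
  unfold lagr
  rw [eval_prod]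
  apply Finset.prod_eq_zero (Finset.mem_univ j)
  rw [eval_prod]
  apply Finset.prod_eq_zero (Finset.mem_erase.2 ⟨hj, hx j⟩)
  simp

end aux

/-- Given a finite set `I ⊆ F^m` and a product grid `S = S 1 × ⋯ × S m`, there is a set
`G ⊆ S` of size at least `|S| - |I|` such that each `g ∈ G` admits a polynomial of
individual degrees at most `|S i| - 1` equal to `1` at `g` and vanishing on
`I ∪ (G \ {g})`. -/
theorem stmt10 (F : Type) [Field F] [DecidableEq F] (m : ℕ) (hm : 1 ≤ m)
    (I : Finset (Fin m → F)) (S : Fin m → Finset F) :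
    ∃ G : Finset (Fin m → F),
      (∀ g ∈ G, ∀ i, g i ∈ S i) ∧
      (∏ i : Fin m, (S i).card) - I.card ≤ G.card ∧
      ∀ g ∈ G, ∃ p : MvPolynomial (Fin m) F,
        (∀ i, p.degreeOf i ≤ (S i).card - 1) ∧
        eval g p = 1 ∧
        (∀ x ∈ I, eval x p = 0) ∧
        (∀ x ∈ G, x ≠ g → eval x p = 0) := by
  classical
  induction I using Finset.induction_on with
  | empty =>
    refine ⟨Fintype.piFinset S, ?_, ?_, ?_⟩
    · intro g hg i
      exact (Fintype.mem_piFinset.1 hg) i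
    · simp [Fintype.card_piFinset]
    · intro g hg
      refine ⟨lagr S g, lagr_degreeOf S g (Fintype.mem_piFinset.1 hg), lagr_eval_self S g, by simp, ?_⟩
      intro x hx hne
      exact lagr_eval_ne S g x (Fintype.mem_piFinset.1 hx) hne
  | @insert a I' hanotmem ih =>
    obtain ⟨G, hGsub, hGcard, hGpoly⟩ := ih
    choose! p hdeg heval1 hevalI hevalG using hGpoly
    by_cases hz : ∃ g₀ ∈ G, eval a (p g₀) ≠ 0
    · obtain ⟨g₀, hg₀, hg₀ne⟩ := hz
      refine ⟨G.erase g₀, ?_, ?_, ?_⟩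
      · intro g hg i; exact hGsub g (Finset.mem_of_mem_erase hg) i
      · rw [Finset.card_erase_of_mem hg₀, Finset.card_insert_of_notMem hanotmem]
        omega
      · intro g hg
        have hgG : g ∈ G := Finset.mem_of_mem_erase hg
        have hgne : g ≠ g₀ := Finset.ne_of_mem_erase hg
        refine ⟨p g - C (eval a (p g) / eval a (p g₀)) * p g₀, ?_, ?_, ?_, ?_⟩
        · intro i
          refine (degreeOf_sub_le i _ _).trans (max_le (hdeg g hgG i) ?_)
          refine (degreeOf_mul_le i _ _).trans ?_
          simpa [degreeOf_C] using hdeg g₀ hg₀ i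
        · simp [heval1 g hgG, hevalG g₀ hg₀ g hgG hgne]
        · intro x hx
          rcases Finset.mem_insert.1 hx with rfl | hx'
          · simp [div_mul_cancel₀ _ hg₀ne]
          · simp [hevalI g hgG x hx', hevalI g₀ hg₀ x hx']
        · intro x hx hne
          have hxG : x ∈ G := Finset.mem_of_mem_erase hx
          have hxg₀ : x ≠ g₀ := Finset.ne_of_mem_erase hx
          simp [hevalG g hgG x hxG hne, hevalG g₀ hg₀ x hxG hxg₀]
    · push_neg at hz
      refine ⟨G, hGsub, ?_, ?_⟩
      · rw [Finset.card_insert_of_notMem hanotmem]; omega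
      · intro g hg
        refine ⟨p g, hdeg g hg, heval1 g hg, ?_, hevalG g hg⟩
        intro x hx
        rcases Finset.mem_insert.1 hx with rfl | hx'
        · exact hz g hg
        · exact hevalI g hg x hx'
end

section
/- Let F be a field, m ≥ 1, S_1,...,S_m ⊆ F finite, S := S_1×...×S_m, d = (d_1,...,d_m), and I ⊆ F^m finite. Suppose there exists a nonzero constraint z : I ∪ S → F with respect to RM[F,m,d] (i.e., ∑_{x} z(x) p(x) = 0 for all polynomials p of individual degrees ≤ d_i) such that z(w) ≠ 0 for some w ∈ S. Then w is determined by I with respect to RM[F,m,d'] where d'_i := d_i - (|S_i| - 1), meaning: there is no polynomial q of individual degrees ≤ d'_i with q(w) = 1 and q(x) = 0 for all x ∈ I. -/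
open MvPolynomial

lemma degreeOf_X_sub_C_le {F : Type} [Field F] {m : ℕ} [DecidableEq (Fin m)]
    (i j : Fin m) (s : F) :
    degreeOf i (X j - C s : MvPolynomial (Fin m) F) ≤ if i = j then 1 else 0 := by
  have h : (X j - C s : MvPolynomial (Fin m) F) = X j + C (-s) := by rw [sub_eq_add_neg, map_neg]
  rw [h]
  refine le_trans (degreeOf_add_le _ _ _) ?_
  rw [degreeOf_C, degreeOf_X]
  simp

/-- If a nonzero constraint `z` on `I ∪ S` with respect to `RM[F,m,d]` has `z w ≠ 0` for
some grid point `w ∈ S = S 1 × ⋯ × S m`, then `w` is determined by `I` with respect to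
`RM[F,m,d']` with `d' i = d i - (|S i| - 1)`: no polynomial of individual degrees `≤ d' i`
is `1` at `w` and `0` on `I`. -/
theorem stmt11 (F : Type) [Field F] [DecidableEq F] (m : ℕ) (hm : 1 ≤ m)
    (S : Fin m → Finset F) (d : Fin m → ℕ) (hd : ∀ i, (S i).card - 1 ≤ d i)
    (I : Finset (Fin m → F)) (z : (Fin m → F) → F)
    (hz : ∀ p : MvPolynomial (Fin m) F, (∀ i, p.degreeOf i ≤ d i) →
      ∑ x ∈ I ∪ Fintype.piFinset S, z x * eval x p = 0)
    (w : Fin m → F) (hwS : w ∈ Fintype.piFinset S) (hzw : z w ≠ 0) :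
    ¬ ∃ q : MvPolynomial (Fin m) F,
        (∀ i, q.degreeOf i ≤ d i - ((S i).card - 1)) ∧
        eval w q = 1 ∧ ∀ x ∈ I, eval x q = 0 := by
  rintro ⟨q, hqdeg, hqw, hqI⟩
  -- the Lagrange-type polynomial
  set L : MvPolynomial (Fin m) F :=
    ∏ i, ∏ s ∈ (S i).erase (w i), (X i - C s) with hL
  have hLdeg : ∀ i, degreeOf i L ≤ (S i).card - 1 := by
    intro i
    refine le_trans (degreeOf_prod_le _ _ _) ?_
    have hstep : ∀ j : Fin m,
        degreeOf i (∏ s ∈ (S j).erase (w j), (X j - C s : MvPolynomial (Fin m) F)) ≤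
          if i = j then (S j).card - 1 else 0 := by
      intro j
      refine le_trans (degreeOf_prod_le _ _ _) ?_
      refine le_trans (Finset.sum_le_sum fun s _ => degreeOf_X_sub_C_le i j s) ?_
      rw [Finset.sum_const, smul_eq_mul]
      by_cases h : i = j
      · subst h
        simp [Finset.card_erase_of_mem (by
          have := hwS; rw [Fintype.mem_piFinset] at this; exact this i)]
      · simp [h]
    refine le_trans (Finset.sum_le_sum fun j _ => hstep j) ?_
    simp [Finset.sum_ite_eq]
  -- evaluation facts about L
  have hLeval : ∀ x : Fin m → F, eval x L = ∏ i, ∏ s ∈ (S i).erase (w i), (x i - s) := by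
    intro x; simp [hL]
  have hLw : eval w L ≠ 0 := by
    rw [hLeval]
    refine Finset.prod_ne_zero_iff.2 fun i _ => Finset.prod_ne_zero_iff.2 fun s hs => ?_
    have := Finset.ne_of_mem_erase hs
    exact sub_ne_zero.2 (Ne.symm this)
  have hLx : ∀ x ∈ Fintype.piFinset S, x ≠ w → eval x L = 0 := by
    intro x hx hxw
    obtain ⟨i, hi⟩ : ∃ i, x i ≠ w i := by
      by_contra h; push_neg at h; exact hxw (funext h)
    rw [hLeval]
    refine Finset.prod_eq_zero (Finset.mem_univ i) ?_
    refine Finset.prod_eq_zero (Finset.mem_erase.2 ⟨hi, ?_⟩) (by ring)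
    rw [Fintype.mem_piFinset] at hx; exact hx i
  -- w is not in I
  have hwI : w ∉ I := fun h => by simp [hqI w h] at hqw
  -- apply the constraint to q * L
  have hdeg : ∀ i, degreeOf i (q * L) ≤ d i := by
    intro i
    refine le_trans (degreeOf_mul_le _ _ _) ?_
    calc degreeOf i q + degreeOf i L ≤ (d i - ((S i).card - 1)) + ((S i).card - 1) :=
          add_le_add (hqdeg i) (hLdeg i)
      _ = d i := Nat.sub_add_cancel (hd i)
  have hsum := hz (q * L) hdeg
  rw [Finset.sum_eq_single_of_mem w (Finset.mem_union_right _ hwS) ?_] at hsum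
  · simp only [map_mul, hqw, one_mul] at hsum
    exact (mul_ne_zero hzw hLw) hsum
  · intro x hx hxw
    rcases Finset.mem_union.1 hx with h | h
    · simp [hqI x h]
    · simp [hLx x h hxw]
end

section
/- Let A = A_1 × ... × A_m with A_i = A_{m-i+1}. Let H, G be prefix-free sets of partial points with |H|·|G| ≤ |A|/4, and suppose ∪H = ∪G_rev (where ∪H is the union of the subcubes indexed by H, and G_rev := {rev(b) : b ∈ G}). Then either |∪H| ≥ (K/2)(1 + √(1 - 4|H||G|/K)) or |∪H| ≤ (K/2)(1 - √(1 - 4|H||G|/K)), where K := |A|. In particular min(|∪H|, |A| - |∪H|) ≤ |H|·|G| + O(|H|²|G|²/|A|). -/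
/-- A partial point of the product set `A 1 × ⋯ × A m`: a tuple of some length `ℓ ≤ m`. -/
abbrev PPoint (α : Type) (m : ℕ) := (ℓ : Fin (m + 1)) × (Fin ℓ.val → α)

variable {α : Type} {m : ℕ}

/-- The subcube of `A = A 1 × ⋯ × A m` indexed by a partial point `p`: all points of `A`
whose first `|p|` coordinates agree with `p`. -/
def cubeOf [DecidableEq α] (A : Fin m → Finset α) (p : PPoint α m) : Finset (Fin m → α) :=
  (Fintype.piFinset A).filter
    (fun x => ∀ j : Fin p.1.val, x (Fin.castLE (Nat.lt_succ_iff.mp p.1.isLt) j) = p.2 j)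

/-- The reversed subcube indexed by a partial point `p` of length `k`: all points of `A`
whose last `k` coordinates equal the reversal of `p`. -/
def cubeRevOf [DecidableEq α] (A : Fin m → Finset α) (p : PPoint α m) : Finset (Fin m → α) :=
  (Fintype.piFinset A).filter
    (fun x => ∀ j : Fin p.1.val,
      x ⟨m - 1 - j.val, by have h1 := j.isLt; have h2 := p.1.isLt; omega⟩ = p.2 j)

/-- `p` is a prefix of `q`. -/
def IsPrefixP (p q : PPoint α m) : Prop :=
  ∃ h : p.1.val ≤ q.1.val, ∀ j : Fin p.1.val, q.2 (Fin.castLE h j) = p.2 j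

/-- A set of partial points is prefix-free if none is a proper prefix of another. -/
def PrefixFreeP (H : Finset (PPoint α m)) : Prop :=
  ∀ p ∈ H, ∀ q ∈ H, IsPrefixP p q → p = q

/-- The union `∪H` of the subcubes indexed by a set of partial points. -/
def unionCube [DecidableEq α] (A : Fin m → Finset α) (H : Finset (PPoint α m)) :
    Finset (Fin m → α) :=
  H.biUnion (cubeOf A)

/-- The union `∪H_rev` of the reversed subcubes indexed by a set of partial points. -/
def unionCubeRev [DecidableEq α] (A : Fin m → Finset α) (H : Finset (PPoint α m)) :
    Finset (Fin m → α) :=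
  H.biUnion (cubeRevOf A)

/-!
Write `s = |∪H|`, `K = |A|`, and `C_p`, `R_q` for the cube of `p` and the reversed cube of `q`.
Since `H` and `G` both index disjoint families, `s = ∑_{p ∈ H, q ∈ G} |C_p ∩ R_q|` and
`s² = ∑_{p, q} |C_p| |R_q|`. If `|p| + |q| ≤ m`, then `C_p` and `R_q` constrain disjoint sets of
coordinates, so `K |C_p ∩ R_q| = |C_p| |R_q|`; otherwise every coordinate is fixed by `p` or `q`
and `|C_p ∩ R_q| ≤ 1`. Summing gives `s (K - s) ≤ K |H| |G|`, and the two alternatives say that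
`s` lies outside the roots of this quadratic.
-/

open Finset

section Boxes

variable {ι β : Type*} [Fintype ι] [DecidableEq ι] [DecidableEq β]

lemma card_piFinset_mul_card_piFinset_inter {A B C : ι → Finset β}
    (hB : ∀ i, B i ⊆ A i) (hC : ∀ i, C i ⊆ A i) (hBC : ∀ i, B i = A i ∨ C i = A i) :
    #(Fintype.piFinset A) * #(Fintype.piFinset B ∩ Fintype.piFinset C) =
      #(Fintype.piFinset B) * #(Fintype.piFinset C) := by
  simp only [← Fintype.piFinset_inter, Fintype.card_piFinset, ← prod_mul_distrib]
  refine prod_congr rfl fun i _ => ?_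
  rcases hBC i with h | h
  · rw [h, inter_eq_right.mpr (hC i)]
  · rw [h, inter_eq_left.mpr (hB i), mul_comm]

lemma card_piFinset_inter_le_one {B C : ι → Finset β} (h : ∀ i, #(B i) ≤ 1 ∨ #(C i) ≤ 1) :
    #(Fintype.piFinset B ∩ Fintype.piFinset C) ≤ 1 := by
  rw [← Fintype.piFinset_inter, Fintype.card_piFinset]
  refine prod_le_one (fun _ _ => Nat.zero_le _) fun i _ => ?_
  rcases h i with h | h
  · exact (card_le_card inter_subset_left).trans h
  · exact (card_le_card inter_subset_right).trans h

end Boxes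

theorem card_biUnion_mul_le_of_biUnion_eq {ι κ β : Type*} [DecidableEq β] {H : Finset ι}
    {G : Finset κ} {X : ι → Finset β} {Y : κ → Finset β} {K : ℕ}
    (hX : (H : Set ι).PairwiseDisjoint X) (hY : (G : Set κ).PairwiseDisjoint Y)
    (hXY : H.biUnion X = G.biUnion Y)
    (hpair : ∀ p ∈ H, ∀ q ∈ G, K * #(X p ∩ Y q) ≤ #(X p) * #(Y q) + K) :
    #(H.biUnion X) * K ≤ #(H.biUnion X) * #(H.biUnion X) + K * (#H * #G) := by
  have hsplit : ∀ p ∈ H, #(X p) = ∑ q ∈ G, #(X p ∩ Y q) := by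
    intro p hp
    have hsub : X p ⊆ G.biUnion Y := hXY ▸ subset_biUnion_of_mem X hp
    calc #(X p) = #(G.biUnion fun q => X p ∩ Y q) := by
          rw [← inter_biUnion, inter_eq_left.mpr hsub]
      _ = ∑ q ∈ G, #(X p ∩ Y q) := card_biUnion fun q hq r hr hne =>
          (hY hq hr hne).mono inter_subset_right inter_subset_right
  have hsq : #(H.biUnion X) * #(H.biUnion X) = ∑ p ∈ H, ∑ q ∈ G, #(X p) * #(Y q) := by
    nth_rw 2 [hXY]
    rw [card_biUnion hX, card_biUnion hY, sum_mul_sum]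
  calc #(H.biUnion X) * K = ∑ p ∈ H, ∑ q ∈ G, K * #(X p ∩ Y q) := by
        rw [card_biUnion hX, sum_mul]
        refine sum_congr rfl fun p hp => ?_
        rw [hsplit p hp, sum_mul]
        exact sum_congr rfl fun q _ => mul_comm _ _
    _ ≤ ∑ p ∈ H, ∑ q ∈ G, (#(X p) * #(Y q) + K) :=
        sum_le_sum fun p hp => sum_le_sum fun q hq => hpair p hp q hq
    _ = #(H.biUnion X) * #(H.biUnion X) + K * (#H * #G) := by
        simp only [sum_add_distrib, sum_const, smul_eq_mul, hsq]
        ring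

section Cubes

variable [DecidableEq α]

def cubeFactor (A : Fin m → Finset α) (p : PPoint α m) (i : Fin m) : Finset α :=
  (A i).filter fun a => ∀ h : i.val < p.1.val, a = p.2 ⟨i, h⟩

def cubeRevFactor (A : Fin m → Finset α) (p : PPoint α m) (i : Fin m) : Finset α :=
  (A i).filter fun a => ∀ h : m - 1 - i.val < p.1.val, a = p.2 ⟨m - 1 - i, h⟩

lemma cubeOf_eq_piFinset (A : Fin m → Finset α) (p : PPoint α m) :
    cubeOf A p = Fintype.piFinset (cubeFactor A p) := by
  ext x
  simp only [cubeOf, cubeFactor, mem_filter, Fintype.mem_piFinset]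
  exact ⟨fun ⟨hA, hp⟩ i => ⟨hA i, fun h => hp ⟨i, h⟩⟩,
    fun hx => ⟨fun i => (hx i).1, fun j => (hx _).2 j.isLt⟩⟩

lemma cubeRevOf_eq_piFinset (A : Fin m → Finset α) (p : PPoint α m) :
    cubeRevOf A p = Fintype.piFinset (cubeRevFactor A p) := by
  ext x
  simp only [cubeRevOf, cubeRevFactor, mem_filter, Fintype.mem_piFinset]
  refine ⟨fun ⟨hA, hp⟩ i => ⟨hA i, fun h => ?_⟩, fun hx => ⟨fun i => (hx i).1, fun j => ?_⟩⟩
  · convert hp ⟨m - 1 - i, h⟩ using 2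
    ext
    simp only
    omega
  · have hj := j.isLt
    have hpm := p.1.isLt
    convert (hx ⟨m - 1 - j, by omega⟩).2 (show m - 1 - (m - 1 - j.val) < p.1.val by omega) using 2
    ext
    simp only
    omega

lemma isPrefixP_of_mem_cubeOf {A : Fin m → Finset α} {p q : PPoint α m} {x : Fin m → α}
    (hle : p.1.val ≤ q.1.val) (hp : x ∈ cubeOf A p) (hq : x ∈ cubeOf A q) : IsPrefixP p q :=
  ⟨hle, fun j => ((mem_filter.mp hq).2 (Fin.castLE hle j)).symm.trans ((mem_filter.mp hp).2 j)⟩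

lemma isPrefixP_of_mem_cubeRevOf {A : Fin m → Finset α} {p q : PPoint α m} {x : Fin m → α}
    (hle : p.1.val ≤ q.1.val) (hp : x ∈ cubeRevOf A p) (hq : x ∈ cubeRevOf A q) :
    IsPrefixP p q :=
  ⟨hle, fun j => ((mem_filter.mp hq).2 (Fin.castLE hle j)).symm.trans ((mem_filter.mp hp).2 j)⟩

lemma card_mul_card_cubeOf_inter_cubeRevOf_le (A : Fin m → Finset α) (p q : PPoint α m) :
    #(Fintype.piFinset A) * #(cubeOf A p ∩ cubeRevOf A q) ≤
      #(cubeOf A p) * #(cubeRevOf A q) + #(Fintype.piFinset A) := by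
  rw [cubeOf_eq_piFinset, cubeRevOf_eq_piFinset]
  by_cases hpq : p.1.val + q.1.val ≤ m
  · rw [card_piFinset_mul_card_piFinset_inter (B := cubeFactor A p) (C := cubeRevFactor A q)
      (fun _ => filter_subset _ _) (fun _ => filter_subset _ _) fun i => ?_]
    · exact le_self_add
    have hi := i.isLt
    by_cases hip : i.val < p.1.val
    · exact .inr (filter_true_of_mem fun _ _ h => absurd h (by omega))
    · exact .inl (filter_true_of_mem fun _ _ h => absurd h hip)
  · refine le_add_left ((Nat.mul_le_mul_left _ (card_piFinset_inter_le_one fun i => ?_)).trans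
      (mul_one _).le)
    have hi := i.isLt
    by_cases hip : i.val < p.1.val
    · exact .inl (card_le_one.mpr fun a ha b hb =>
        ((mem_filter.mp ha).2 hip).trans ((mem_filter.mp hb).2 hip).symm)
    · have hiq : m - 1 - i.val < q.1.val := by omega
      exact .inr (card_le_one.mpr fun a ha b hb =>
        ((mem_filter.mp ha).2 hiq).trans ((mem_filter.mp hb).2 hiq).symm)

end Cubes

lemma PrefixFreeP.pairwiseDisjoint {β : Type*} {H : Finset (PPoint α m)}
    {C : PPoint α m → Finset β} (hH : PrefixFreeP H)
    (hC : ∀ {p q : PPoint α m} {x : β}, p.1.val ≤ q.1.val → x ∈ C p → x ∈ C q → IsPrefixP p q) :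
    (H : Set (PPoint α m)).PairwiseDisjoint C := by
  intro p hp q hq hne
  refine disjoint_left.mpr fun x hxp hxq => ?_
  rcases le_total p.1.val q.1.val with h | h
  · exact hne (hH p hp q hq (hC h hxp hxq))
  · exact hne (hH q hq p hp (hC h hxq hxp)).symm

lemma le_or_le_of_mul_sub_le {K s P : ℝ} (hK : 0 ≤ K) (h : s * (K - s) ≤ K * P) :
    K / 2 * (1 + √(1 - 4 * P / K)) ≤ s ∨ s ≤ K / 2 * (1 - √(1 - 4 * P / K)) := by
  have hdisc : K ^ 2 * (1 - 4 * P / K) = K ^ 2 - 4 * P * K := by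
    rcases hK.eq_or_lt with rfl | hK
    · simp
    · field_simp
  have hroot : K * √(1 - 4 * P / K) ≤ |2 * s - K| := by
    have hKsqrt : K * √(1 - 4 * P / K) = √(K ^ 2 * (1 - 4 * P / K)) := by
      rw [Real.sqrt_mul (sq_nonneg K), Real.sqrt_sq hK]
    rw [hKsqrt, hdisc, ← Real.sqrt_sq_eq_abs]
    exact Real.sqrt_le_sqrt (by nlinarith)
  rcases le_abs.mp hroot with h | h
  · left; linarith
  · right; linarith

lemma le_add_sq_div_of_mul_sub_le {K t P : ℝ} (ht : 0 ≤ t) (htK : 2 * t ≤ K) (hP : 0 ≤ P)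
    (h : t * (K - t) ≤ K * P) : t ≤ P + 4 * P ^ 2 / K := by
  rcases (show 0 ≤ K by linarith).eq_or_lt with rfl | hK
  · simp only [div_zero, add_zero]
    linarith
  have ht2 : t ≤ 2 * P := by nlinarith [mul_nonneg ht (sub_nonneg.mpr htK)]
  rw [← sub_le_iff_le_add', le_div_iff₀ hK]
  nlinarith [mul_le_mul ht2 ht2 ht (by positivity)]

lemma min_le_add_sq_div_of_mul_sub_le {K s P : ℝ} (hs : 0 ≤ s) (hsK : s ≤ K) (hP : 0 ≤ P)
    (h : s * (K - s) ≤ K * P) : min s (K - s) ≤ P + 4 * P ^ 2 / K := by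
  rcases le_total s (K - s) with hle | hle
  · rw [min_eq_left hle]
    exact le_add_sq_div_of_mul_sub_le hs (by linarith) hP h
  · rw [min_eq_right hle]
    exact le_add_sq_div_of_mul_sub_le (sub_nonneg.mpr hsK) (by linarith) hP
      (by rwa [sub_sub_cancel, mul_comm])

/-- Reverse-set bound: if `H, G` are prefix-free sets of partial points with
`∪H = ∪G_rev` and `|H|·|G| ≤ |A|/4`, then `|∪H| ≥ (K/2)(1 + √(1 - 4|H||G|/K))` or
`|∪H| ≤ (K/2)(1 - √(1 - 4|H||G|/K))` where `K = |A|`; in particular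
`min(|∪H|, |A| - |∪H|) ≤ |H||G| + O(|H|²|G|²/|A|)`. -/
theorem stmt13 :
    ∃ Cst : ℝ, 0 < Cst ∧
      ∀ (α : Type) [DecidableEq α] (m : ℕ) (A : Fin m → Finset α),
        (∀ i, A i = A (Fin.rev i)) →
        ∀ H G : Finset (PPoint α m), PrefixFreeP H → PrefixFreeP G →
          4 * (H.card * G.card) ≤ (Fintype.piFinset A).card →
          unionCube A H = unionCubeRev A G →
          ((((Fintype.piFinset A).card : ℝ) / 2 *
              (1 + Real.sqrt (1 - 4 * (H.card * G.card : ℝ) / (Fintype.piFinset A).card)) ≤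
              (unionCube A H).card ∨
            ((unionCube A H).card : ℝ) ≤ ((Fintype.piFinset A).card : ℝ) / 2 *
              (1 - Real.sqrt (1 - 4 * (H.card * G.card : ℝ) / (Fintype.piFinset A).card))) ∧
          min ((unionCube A H).card : ℝ)
              (((Fintype.piFinset A).card : ℝ) - (unionCube A H).card) ≤
            (H.card * G.card : ℝ) +
              Cst * (H.card * G.card : ℝ) ^ 2 / (Fintype.piFinset A).card) := by
  refine ⟨4, by norm_num, fun α _ m A _ H G hH hG _ hEq => ?_⟩
  have hsK : #(unionCube A H) ≤ #(Fintype.piFinset A) :=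
    card_le_card (biUnion_subset.mpr fun _ _ => filter_subset _ _)
  have hcount : #(unionCube A H) * #(Fintype.piFinset A) ≤
      #(unionCube A H) * #(unionCube A H) + #(Fintype.piFinset A) * (#H * #G) :=
    card_biUnion_mul_le_of_biUnion_eq (hH.pairwiseDisjoint isPrefixP_of_mem_cubeOf)
      (hG.pairwiseDisjoint isPrefixP_of_mem_cubeRevOf) hEq
      fun p _ q _ => card_mul_card_cubeOf_inter_cubeRevOf_le A p q
  have hquad : (#(unionCube A H) : ℝ) * (#(Fintype.piFinset A) - #(unionCube A H)) ≤
      #(Fintype.piFinset A) * (#H * #G : ℝ) := by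
    have := (Nat.cast_le (α := ℝ)).mpr hcount
    push_cast at this
    linarith
  exact ⟨le_or_le_of_mul_sub_le (Nat.cast_nonneg _) hquad,
    min_le_add_sq_div_of_mul_sub_le (Nat.cast_nonneg _) (Nat.cast_le.mpr hsK)
      (mul_nonneg (Nat.cast_nonneg _) (Nat.cast_nonneg _)) hquad⟩
end

section
/- Let F be a field, m ≥ 1, d ∈ ℕ^m, and let S ⊆ F^m be a finite set. Suppose that every point w ∈ {0,1}^m is S-good with respect to degree d, meaning there exists a polynomial q_w with deg_{X_i}(q_w) ≤ d_i satisfying q_w(w) = 1, q_w(x) = 0 for all x ∈ {0,1}^m \ {w}, and q_w(s) = 0 for all s ∈ S. Then for every polynomial P with individual degrees ≤ d_i there exists a polynomial Z with individual degrees ≤ d_i such that Z vanishes on {0,1}^m and Z|_S = P|_S. (Equivalently, LD[0,d]|_S = RM[F,m,d]|_S.) -/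
set_option maxHeartbeats 1000000


open MvPolynomial

/-- If every hypercube point `w ∈ {0,1}^m` is `S`-good with respect to degree `d` (there
is a polynomial of individual degrees `≤ d i` equal to `1` at `w` and vanishing on the
rest of `{0,1}^m` and on `S`), then every polynomial `P` of individual degrees `≤ d i`
agrees on `S` with some polynomial of individual degrees `≤ d i` vanishing on the whole
hypercube: `LD[0,d]|_S = RM[F,m,d]|_S`. -/
theorem stmt17 (F : Type) [Field F] (m : ℕ) (hm : 1 ≤ m) (d : Fin m → ℕ)
    (S : Finset (Fin m → F))
    (hgood : ∀ w : Fin m → Bool, ∃ q : MvPolynomial (Fin m) F,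
      (∀ i, q.degreeOf i ≤ d i) ∧
      eval (fun i => if w i then (1 : F) else 0) q = 1 ∧
      (∀ x : Fin m → Bool, x ≠ w → eval (fun i => if x i then (1 : F) else 0) q = 0) ∧
      (∀ s ∈ S, eval s q = 0)) :
    ∀ P : MvPolynomial (Fin m) F, (∀ i, P.degreeOf i ≤ d i) →
      ∃ Z : MvPolynomial (Fin m) F,
        (∀ i, Z.degreeOf i ≤ d i) ∧
        (∀ a : Fin m → Bool, eval (fun i => if a i then (1 : F) else 0) Z = 0) ∧
        ∀ s ∈ S, eval s Z = eval s P := by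
  intro P hP
  choose Q hQdeg hQone hQzero hQS using hgood
  refine ⟨P - ∑ w : Fin m → Bool, C (eval (fun i => if w i then (1:F) else 0) P) * Q w,
    ?_, ?_, ?_⟩
  · intro i
    rw [sub_eq_add_neg]
    refine le_trans (degreeOf_add_le i _ _) (max_le (hP i) ?_)
    rw [degreeOf_neg]
    refine le_trans (degreeOf_sum_le i _ _) ?_
    simp only [Finset.sup_le_iff, Finset.mem_univ, forall_true_left]
    intro w
    exact le_trans (degreeOf_C_mul_le _ i _) (hQdeg w i)
  · intro a
    simp only [map_sub, map_sum, map_mul, eval_C]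
    rw [Finset.sum_eq_single a]
    · simp [hQone a]
    · intro w _ hw
      rw [hQzero w a (Ne.symm hw), mul_zero]
    · simp
  · intro s hs
    simp only [map_sub, map_sum, map_mul, eval_C]
    rw [Finset.sum_eq_zero fun w _ => by rw [hQS w s hs, mul_zero], sub_zero]
end
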